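/- arXiv:2306.06925 — 3 statements merged into one kernel-verified Lean document; each statement's English description precedes it below -/
import Mathlib

section
/- The product P J of the binary Pascal matrix and the anti-diagonal matrix satisfies (P J)³ = I over GF(2). -/
/-!
`P` and `J` are involutions satisfying the braid relation `P J P = J P J`, so `P J` has order
dividing 3. Both `P² = 1` and the braid relation are binomial sums that collapse in
characteristic 2: column `j` of `P` holds the coefficients of `(X + 1) ^ j`, and `(X + 1) + 1 = X`.
-/

open Matrix

/-- The binary Pascal matrix over GF(2): entries C(j-1, i-1) mod 2 (1-indexed),
i.e. C(j, i) with 0-indexed `Fin`. -/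
def pascal (m : ℕ) : Matrix (Fin m) (Fin m) (ZMod 2) :=
  fun i j => (Nat.choose j.val i.val : ZMod 2)

/-- The anti-diagonal matrix over GF(2), with ones on the anti-diagonal. -/
def antiDiag (m : ℕ) : Matrix (Fin m) (Fin m) (ZMod 2) :=
  fun i j => if i.val + j.val + 1 = m then 1 else 0

open Polynomial Finset

theorem mul_pow_three_eq_one_of_braid {M : Type*} [Monoid M] {a b : M} (ha : a * a = 1)
    (hb : b * b = 1) (hab : a * b * a = b * a * b) : (a * b) ^ 3 = 1 :=
  calc (a * b) ^ 3 = (a * b * a) * (b * a * b) := by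
        simp only [pow_succ, pow_zero, one_mul, mul_assoc]
    _ = b * a * (b * b) * a * b := by rw [hab]; simp only [mul_assoc]
    _ = 1 := by rw [hb, mul_one, mul_assoc b, ha, mul_one, hb]

theorem antiDiag_eq_submatrix (m : ℕ) :
    antiDiag m = (1 : Matrix (Fin m) (Fin m) (ZMod 2)).submatrix Fin.rev id := by
  ext i j
  simp only [antiDiag, submatrix_apply, id, one_apply, Fin.ext_iff, Fin.val_rev]
  have := i.isLt
  exact if_congr (by omega) rfl rfl

theorem antiDiag_mul_apply {m : ℕ} (A : Matrix (Fin m) (Fin m) (ZMod 2)) (i j : Fin m) :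
    (antiDiag m * A) i j = A i.rev j := by
  simp [antiDiag_eq_submatrix, mul_apply, one_apply]

theorem mul_antiDiag_apply {m : ℕ} (A : Matrix (Fin m) (Fin m) (ZMod 2)) (i j : Fin m) :
    (A * antiDiag m) i j = A i j.rev := by
  simp [antiDiag_eq_submatrix, mul_apply, one_apply, Fin.rev_eq_iff]

theorem antiDiag_mul_self (m : ℕ) : antiDiag m * antiDiag m = 1 := by
  ext i j
  rw [antiDiag_mul_apply]
  simp [antiDiag_eq_submatrix, one_apply]

section CharTwo

variable {R : Type*} [CommRing R] [CharP R 2]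

theorem sum_choose_mul_X_add_one_pow (j : ℕ) :
    ∑ k ∈ range (j + 1), (j.choose k : R[X]) * (X + 1) ^ k = X ^ j := by
  have := (add_pow (X + 1 : R[X]) 1 j).symm
  simpa [add_assoc, CharTwo.add_self_eq_zero, mul_comm] using this

theorem sum_choose_mul_X_add_one_pow_sub {j n : ℕ} (hjn : j ≤ n) :
    ∑ k ∈ range (j + 1), (j.choose k : R[X]) * (X + 1) ^ (n - k) =
      X ^ j * (X + 1) ^ (n - j) := by
  have h1 : (1 + (X + 1) : R[X]) = X := by
    rw [add_comm, add_assoc, CharTwo.add_self_eq_zero, add_zero]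
  have := (add_pow (1 : R[X]) (X + 1) j).symm
  rw [h1] at this
  rw [← this, sum_mul]
  refine sum_congr rfl fun k hk => ?_
  have := mem_range.1 hk
  rw [one_pow, one_mul, show n - k = (j - k) + (n - j) by omega, pow_add]
  ring

theorem sum_choose_mul_choose (i j : ℕ) :
    ∑ k ∈ range (j + 1), (j.choose k : R) * (k.choose i : R) = if i = j then 1 else 0 := by
  simpa [finsetSum_coeff, coeff_X_add_one_pow, coeff_X_pow] using
    congrArg (coeff · i) (sum_choose_mul_X_add_one_pow (R := R) j)

theorem sum_choose_mul_choose_sub {i j n : ℕ} (hin : i ≤ n) (hjn : j ≤ n) :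
    ∑ k ∈ range (j + 1), (j.choose k : R) * ((n - k).choose i : R) =
      ((n - j).choose (n - i) : R) := by
  have := congrArg (coeff · i) (sum_choose_mul_X_add_one_pow_sub (R := R) hjn)
  simp only [finsetSum_coeff, coeff_natCast_mul, coeff_X_add_one_pow, coeff_X_pow_mul'] at this
  rw [this]
  split_ifs with hji
  · rw [Nat.choose_symm_of_eq_add (show n - j = (i - j) + (n - i) by omega)]
  · rw [Nat.choose_eq_zero_of_lt (by omega), Nat.cast_zero]

end CharTwo

theorem sum_fin_choose_mul {R : Type*} [CommSemiring R] {m j : ℕ} (hj : j < m) (f : ℕ → R) :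
    ∑ k : Fin m, (j.choose k : R) * f k = ∑ k ∈ range (j + 1), (j.choose k : R) * f k := by
  rw [Fin.sum_univ_eq_sum_range (fun k => (j.choose k : R) * f k)]
  refine (sum_subset (range_subset_range.2 hj) fun k _ hk => ?_).symm
  rw [Nat.choose_eq_zero_of_lt (by simpa using hk), Nat.cast_zero, zero_mul]

theorem pascal_mul_self (m : ℕ) : pascal m * pascal m = 1 := by
  ext i j
  simp only [mul_apply, one_apply, pascal, mul_comm (_ : ZMod 2) ((j : ℕ).choose _ : ZMod 2)]
  rw [sum_fin_choose_mul j.isLt (fun k => (k.choose i : ZMod 2)), sum_choose_mul_choose]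
  exact if_congr Fin.val_inj rfl rfl

theorem pascal_mul_antiDiag_mul_pascal (m : ℕ) :
    pascal m * antiDiag m * pascal m = antiDiag m * pascal m * antiDiag m := by
  ext i j
  have hrev (k : Fin m) : (k.rev : ℕ) = (m - 1) - k := by rw [Fin.val_rev]; omega
  rw [mul_apply, mul_antiDiag_apply, antiDiag_mul_apply]
  simp only [mul_antiDiag_apply, pascal, hrev, mul_comm (_ : ZMod 2) ((j : ℕ).choose _ : ZMod 2)]
  rw [sum_fin_choose_mul j.isLt (fun k => ((m - 1 - k).choose i : ZMod 2)),
    sum_choose_mul_choose_sub (by omega) (by omega)]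

/-- `(P J)³ = I` over GF(2). -/
theorem pascal_antiDiag_cube (m : ℕ) : (pascal m * antiDiag m) ^ 3 = 1 :=
  mul_pow_three_eq_one_of_braid (pascal_mul_self m) (antiDiag_mul_self m)
    (pascal_mul_antiDiag_mul_pascal m)
end

section
/- A pair (I, C_y) of m×m matrices over GF(2), where I is the identity, is dyadic if and only if all leading principal minors of C_y J are nonzero, where J is the anti-diagonal matrix. -/
/-! Reordering the rows and columns of the hybrid matrix of `(I, C_y)` so that the identity rows
come first makes it block lower triangular with an identity block, so its determinant is that of
the top-right `r × r` corner of `C_y`. The leading `r × r` minor of `C_y J` is the same corner with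
its columns reversed, and over GF(2) permuting columns does not change a determinant. -/

open Matrix

/-- The hybrid matrix whose first `m - r` rows are the first `m - r` rows of `Cx`
and whose last `r` rows are the first `r` rows of `Cy`. -/
def hybrid (m r : ℕ) (Cx Cy : Matrix (Fin m) (Fin m) (ZMod 2)) :
    Matrix (Fin m) (Fin m) (ZMod 2) :=
  fun i j =>
    if i.val < m - r then Cx i j
    else Cy ⟨i.val - (m - r), Nat.lt_of_le_of_lt (Nat.sub_le _ _) i.isLt⟩ j

/-- A dyadic pair: all hybrid matrices are invertible. -/
def DyadicPair {m : ℕ} (Cx Cy : Matrix (Fin m) (Fin m) (ZMod 2)) : Prop :=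
  ∀ r ≤ m, (hybrid m r Cx Cy).det ≠ 0
/-- A progressive matrix: all leading principal minors are nonzero. -/
def ProgressiveMat {m : ℕ} (C : Matrix (Fin m) (Fin m) (ZMod 2)) : Prop :=
  ∀ k, ∀ hk : k ≤ m, (C.submatrix (Fin.castLE hk) (Fin.castLE hk)).det ≠ 0

theorem det_submatrix_id_perm_of_charTwo {n R : Type*} [Fintype n] [DecidableEq n] [CommRing R]
    [CharP R 2] (σ : Equiv.Perm n) (M : Matrix n n R) : (M.submatrix id σ).det = M.det := by
  rw [det_permute']
  rcases Int.units_eq_one_or (Equiv.Perm.sign σ) with h | h <;> simp [h, CharTwo.neg_eq]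

theorem antiDiag_eq_toMatrix_revPerm (m : ℕ) :
    antiDiag m = (Fin.revPerm : Equiv.Perm (Fin m)).toPEquiv.toMatrix := by
  ext i j
  simp only [antiDiag, PEquiv.toMatrix_apply, Equiv.toPEquiv_apply, Option.mem_def,
    Option.some.injEq, Fin.revPerm_apply, Fin.ext_iff, Fin.val_rev]
  congr 1
  apply propext
  omega

theorem mul_antiDiag {m : ℕ} (M : Matrix (Fin m) (Fin m) (ZMod 2)) :
    M * antiDiag m = M.submatrix id Fin.rev := by
  rw [antiDiag_eq_toMatrix_revPerm, PEquiv.mul_toMatrix_toPEquiv]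
  rfl

/-- Rows `0, …, r - 1` and, via `Fin.rev ∘ Fin.castLE hr ∘ Fin.rev`, columns `m - r, …, m - 1`. -/
def topRightCorner {α : Type*} {m r : ℕ} (M : Matrix (Fin m) (Fin m) α) (hr : r ≤ m) :
    Matrix (Fin r) (Fin r) α :=
  M.submatrix (Fin.castLE hr) (Fin.rev ∘ Fin.castLE hr ∘ Fin.rev)

theorem det_leadingMinor_mul_antiDiag {m k : ℕ} (M : Matrix (Fin m) (Fin m) (ZMod 2))
    (hk : k ≤ m) :
    ((M * antiDiag m).submatrix (Fin.castLE hk) (Fin.castLE hk)).det =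
      (topRightCorner M hk).det := by
  rw [← det_submatrix_id_perm_of_charTwo Fin.revPerm, mul_antiDiag]
  congr 1

theorem det_hybrid_one {m r : ℕ} (M : Matrix (Fin m) (Fin m) (ZMod 2)) (hr : r ≤ m) :
    (hybrid m r 1 M).det = (topRightCorner M hr).det := by
  let e : Fin (m - r) ⊕ Fin r ≃ Fin m := finSumFinEquiv.trans (finCongr (Nat.sub_add_cancel hr))
  have hblocks : (hybrid m r 1 M).submatrix e e =
      fromBlocks 1 0 (M.submatrix (Fin.castLE hr) (e ∘ .inl)) (topRightCorner M hr) := by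
    ext (i | i) (j | j) <;>
      simp [hybrid, e, topRightCorner, Matrix.one_apply, Fin.ext_iff] <;>
      first | omega | (congr 1 <;> ext <;> simp [Fin.val_rev] <;> omega)
  rw [← det_submatrix_equiv_self e, hblocks, det_fromBlocks_zero₁₂, det_one, one_mul]

/-- `(I, C_y)` is a dyadic pair iff all leading principal minors of `C_y J`
are nonzero. -/
theorem dyadicPair_one_iff (m : ℕ) (Cy : Matrix (Fin m) (Fin m) (ZMod 2)) :
    DyadicPair 1 Cy ↔ ProgressiveMat (Cy * antiDiag m) :=
  forall_congr' fun r => forall_congr' fun hr => by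
    rw [det_hybrid_one Cy hr, det_leadingMinor_mul_antiDiag Cy hr]
end

section
/- There is a unique upper unitriangular m×m matrix U over GF(2) such that the pair (I, U) is progressive; equivalently, a unique upper unitriangular matrix all of whose shifted leading minors are nonzero. -/
open Matrix

/-- Lower unitriangular matrix over GF(2). -/
def IsLowerUni {m : ℕ} (L : Matrix (Fin m) (Fin m) (ZMod 2)) : Prop :=
  (∀ i, L i i = 1) ∧ ∀ i j : Fin m, i < j → L i j = 0

/-- Upper unitriangular matrix over GF(2). -/
def IsUpperUni {m : ℕ} (U : Matrix (Fin m) (Fin m) (ZMod 2)) : Prop :=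
  (∀ i, U i i = 1) ∧ ∀ i j : Fin m, j < i → U i j = 0
/-- A progressive pair: for all `r ≤ k ≤ m`, the hybrid matrix built from the
leading `k × k` blocks of `Cx` and `Cy` is invertible. -/
def ProgressivePair {m : ℕ} (Cx Cy : Matrix (Fin m) (Fin m) (ZMod 2)) : Prop :=
  ∀ k, ∀ hk : k ≤ m, ∀ r ≤ k,
    (hybrid k r (Cx.submatrix (Fin.castLE hk) (Fin.castLE hk))
                (Cy.submatrix (Fin.castLE hk) (Fin.castLE hk))).det ≠ 0

/-!
In the hybrid matrix of `(1, U)` the top `k - r` rows are unit vectors, so its determinant is the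
shifted leading minor of `U` on rows `0, …, r - 1` and columns `k - r, …, k - 1`. For the Pascal
matrix this minor is `det (C(c + u, i))`, which Vandermonde's identity factors as a lower times an
upper unitriangular matrix, so it is `1`. Conversely, an entry `U i j` with `i ≤ j` is the corner
of the shifted minor on rows `0, …, i` ending in column `j`; that determinant is affine in the
entry, with the preceding shifted minor as (nonzero) slope, and over GF(2) every nonzero
determinant is `1`. So the entries of `U` are forced one at a time, column by column.
-/

theorem Matrix.apply_eq_of_det_eq {K : Type*} [Field K] {n : ℕ}
    {A B : Matrix (Fin (n + 1)) (Fin (n + 1)) K} {p q : Fin (n + 1)}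
    (hAB : ∀ i j, i ≠ p ∨ j ≠ q → A i j = B i j) (hdet : A.det = B.det)
    (hminor : (A.submatrix p.succAbove q.succAbove).det ≠ 0) : A p q = B p q := by
  have hminors : ∀ j : Fin (n + 1),
      B.submatrix p.succAbove j.succAbove = A.submatrix p.succAbove j.succAbove :=
    fun j => Matrix.ext fun a b => (hAB _ _ (.inl (Fin.succAbove_ne p a))).symm
  have hdiff : B.det - A.det =
      (-1) ^ (p + q : ℕ) * (B p q - A p q) * (A.submatrix p.succAbove q.succAbove).det := by
    rw [det_succ_row B p, det_succ_row A p, ← Finset.sum_sub_distrib,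
      Finset.sum_eq_single q (fun j _ hj => by simp [hminors, hAB p j (.inr hj)]) (by simp),
      hminors]
    ring
  rw [hdet, sub_self] at hdiff
  exact (sub_eq_zero.1 (by simpa [hminor] using hdiff.symm)).symm

open Finset in
theorem Nat.choose_add_eq_sum_range (c u i : ℕ) :
    (c + u).choose i = ∑ s ∈ range (i + 1), c.choose (i - s) * u.choose s := by
  rw [add_comm, Nat.add_choose_eq,
    Nat.sum_antidiagonal_eq_sum_range_succ fun a b => u.choose a * c.choose b]
  exact sum_congr rfl fun s _ => mul_comm _ _

open Finset in
theorem det_of_choose_add (R : Type*) [CommRing R] (r c : ℕ) :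
    (of fun i u : Fin r => ((c + u : ℕ).choose i : R)).det = 1 := by
  have hfac : (of fun i u : Fin r => ((c + u : ℕ).choose i : R)) =
      (of fun i s : Fin r => if s ≤ i then (c.choose (i - s) : R) else 0) *
        of fun s u : Fin r => ((u : ℕ).choose s : R) := by
    ext i u
    have hi : (i : ℕ) + 1 ≤ r := i.isLt
    simp only [mul_apply, of_apply, Fin.le_def]
    rw [Fin.sum_univ_eq_sum_range
        (fun s => (if s ≤ i then (c.choose (i - s) : R) else 0) * (u.val.choose s : R)),
      ← sum_range_add_sum_Ico _ hi, Nat.choose_add_eq_sum_range,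
      sum_eq_zero (s := Ico _ r) fun s hs => by simp [Nat.not_le.2 (mem_Ico.1 hs).1], add_zero]
    push_cast
    exact sum_congr rfl fun s hs => by simp [Nat.lt_succ_iff.1 (mem_range.1 hs)]
  rw [hfac, det_mul, det_of_isLowerTriangular, det_of_isUpperTriangular]
  · simp
  · intro s u (hus : u < s)
    simp [Nat.choose_eq_zero_of_lt (Fin.lt_def.1 hus)]
  · intro i s (his : i < s)
    simp [not_le.2 his]

def shiftedMinor {R : Type*} {m : ℕ} (U : Matrix (Fin m) (Fin m) R) (r c : ℕ)
    (h : r + c ≤ m) : Matrix (Fin r) (Fin r) R :=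
  Matrix.of fun i u => U ⟨i, by omega⟩ ⟨c + u, by omega⟩

section shiftedMinor

variable {R : Type*} {m : ℕ} (U : Matrix (Fin m) (Fin m) R)

theorem shiftedMinor_apply_of_val_eq {r c : ℕ} {h : r + c ≤ m} {i u : Fin r} {x y : Fin m}
    (hx : x.val = i) (hy : y.val = c + u) : shiftedMinor U r c h i u = U x y := by
  obtain ⟨x, _⟩ := x
  obtain ⟨y, _⟩ := y
  dsimp only at hx hy
  subst hx hy
  rfl

theorem shiftedMinor_submatrix_castSucc {r c : ℕ} (h : r + 1 + c ≤ m) :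
    (shiftedMinor U (r + 1) c h).submatrix Fin.castSucc Fin.castSucc =
      shiftedMinor U r c (by omega) :=
  rfl

@[simp]
theorem shiftedMinor_submatrix_castLE {k r c : ℕ} (hk : k ≤ m) (h : r + c ≤ k) :
    shiftedMinor (U.submatrix (Fin.castLE hk) (Fin.castLE hk)) r c h =
      shiftedMinor U r c (h.trans hk) :=
  rfl

end shiftedMinor

theorem eq_of_det_shiftedMinor_eq {K : Type*} [Field K] {m : ℕ} {U V : Matrix (Fin m) (Fin m) K}
    (hlower : ∀ i j, j < i → U i j = V i j)
    (hdet : ∀ r c h, (shiftedMinor U r c h).det = (shiftedMinor V r c h).det)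
    (hne : ∀ r c h, (shiftedMinor U r c h).det ≠ 0) : U = V := by
  suffices ∀ p : Fin m ×ₗ Fin m, U (ofLex p).2 (ofLex p).1 = V (ofLex p).2 (ofLex p).1 from
    ext fun i j => this (toLex (j, i))
  intro p
  induction p using WellFoundedLT.induction with | _ p ih => ?_
  obtain ⟨j, i⟩ := p
  have ih' : ∀ a b, b < j ∨ (b = j ∧ a < i) → U a b = V a b := fun a b hab =>
    ih (toLex (b, a)) (Prod.Lex.toLex_lt_toLex.2 hab)
  show U i j = V i j
  rcases lt_or_ge j i with hji | hij
  · exact hlower i j hji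
  have h : (i : ℕ) + 1 + (j - i) ≤ m := by omega
  have hagree : ∀ a b : Fin (i + 1), a ≠ Fin.last i ∨ b ≠ Fin.last i →
      shiftedMinor U (i + 1) (j - i) h a b = shiftedMinor V (i + 1) (j - i) h a b := by
    intro a b hab
    have ha := a.isLt
    have hb := b.isLt
    simp only [shiftedMinor, of_apply]
    apply ih'
    simp only [ne_eq, Fin.ext_iff, Fin.val_last, Fin.lt_def] at hab ⊢
    omega
  have hcorner := Matrix.apply_eq_of_det_eq hagree (hdet _ _ h)
    (by simpa [shiftedMinor_submatrix_castSucc] using hne i (j - i) (by omega))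
  have hx : (i : ℕ) = Fin.last i := rfl
  have hy : (j : ℕ) = j - i + Fin.last i := by simp; omega
  rwa [shiftedMinor_apply_of_val_eq U hx hy, shiftedMinor_apply_of_val_eq V hx hy] at hcorner

theorem det_hybrid_one_s11 {k r : ℕ} (hr : r ≤ k) (A : Matrix (Fin k) (Fin k) (ZMod 2)) :
    (hybrid k r 1 A).det = (shiftedMinor A r (k - r) (by omega)).det := by
  let e : Fin (k - r) ⊕ Fin r ≃ Fin k := finSumFinEquiv.trans (finCongr (Nat.sub_add_cancel hr))
  have he_inl (a : Fin (k - r)) : e (.inl a) = ⟨a, by omega⟩ := rfl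
  have he_inr (u : Fin r) : e (.inr u) = ⟨k - r + u, by omega⟩ := rfl
  have hblocks : (hybrid k r 1 A).submatrix e e =
      fromBlocks 1 0 (of fun (i : Fin r) (b : Fin (k - r)) => A ⟨i, by omega⟩ ⟨b, by omega⟩)
        (shiftedMinor A r (k - r) (by omega)) := by
    ext (a | a) (b | b) <;> simp [hybrid, he_inl, he_inr, one_apply, shiftedMinor, Fin.ext_iff]
    omega
  rw [← det_submatrix_equiv_self e, hblocks, det_fromBlocks_zero₁₂, det_one, one_mul]

theorem progressivePair_one_iff {m : ℕ} (U : Matrix (Fin m) (Fin m) (ZMod 2)) :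
    ProgressivePair 1 U ↔ ∀ r c (h : r + c ≤ m), (shiftedMinor U r c h).det ≠ 0 := by
  simp only [ProgressivePair, submatrix_one _ (Fin.castLE_injective _)]
  constructor
  · intro hU r c h
    have hk := hU (r + c) h r (Nat.le_add_right r c)
    rw [det_hybrid_one_s11 (Nat.le_add_right r c), shiftedMinor_submatrix_castLE] at hk
    convert hk using 3
    omega
  · intro hU k hk r hr
    rw [det_hybrid_one_s11 hr, shiftedMinor_submatrix_castLE]
    exact hU r (k - r) (by omega)

theorem isUpperUni_pascal (m : ℕ) : IsUpperUni (pascal m) :=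
  ⟨fun i => by simp [pascal], fun i j (hji : j < i) => by
    simp [pascal, Nat.choose_eq_zero_of_lt (Fin.lt_def.1 hji)]⟩

theorem progressivePair_one_pascal (m : ℕ) : ProgressivePair 1 (pascal m) :=
  (progressivePair_one_iff _).2 fun r c _ =>
    (det_of_choose_add (ZMod 2) r c).trans_ne one_ne_zero

theorem IsUpperUni.eq_of_progressivePair_one {m : ℕ} {U V : Matrix (Fin m) (Fin m) (ZMod 2)}
    (hU : IsUpperUni U) (hV : IsUpperUni V) (hUp : ProgressivePair 1 U)
    (hVp : ProgressivePair 1 V) : U = V := by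
  rw [progressivePair_one_iff] at hUp hVp
  have hone : ∀ a : ZMod 2, a ≠ 0 → a = 1 := by decide
  exact eq_of_det_shiftedMinor_eq (fun i j hji => by rw [hU.2 i j hji, hV.2 i j hji])
    (fun r c h => by rw [hone _ (hUp r c h), hone _ (hVp r c h)]) hUp

/-- There is a unique upper unitriangular matrix `U` over GF(2) such that
`(I, U)` is a progressive pair. -/
theorem exists_unique_upperUni_progressive (m : ℕ) :
    ∃! U : Matrix (Fin m) (Fin m) (ZMod 2),
      IsUpperUni U ∧ ProgressivePair 1 U :=
  ⟨pascal m, ⟨isUpperUni_pascal m, progressivePair_one_pascal m⟩, fun _ ⟨hV, hVp⟩ =>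
    hV.eq_of_progressivePair_one (isUpperUni_pascal m) hVp (progressivePair_one_pascal m)⟩
end
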